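/- For all n ≥ 2, the prefix reversal diameter of fully binary strings of length n equals n − 1; that is, d(s,t) ≤ n − 1 for all compatible fully binary strings s, t of length n, and there exist compatible fully binary strings s, t of length n with d(s,t) = n − 1. -/

import Mathlib

/-- Prefix reversal (flip) of the first `i` symbols of `s`. -/
def pflip (i : ℕ) (s : List ℕ) : List ℕ := (s.take i).reverse ++ s.drop i

/-- One flip step: `t` is obtained from `s` by some flip `f^(i)` with `1 ≤ i ≤ |s|`. -/
def FlipStep (s t : List ℕ) : Prop := ∃ i, 1 ≤ i ∧ i ≤ s.length ∧ t = pflip i s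

/-- `ReachIn m s t`: `t` can be obtained from `s` by exactly `m` flips. -/
def ReachIn : ℕ → List ℕ → List ℕ → Prop
  | 0 => fun s t => s = t
  | (m+1) => fun s t => ∃ u, FlipStep s u ∧ ReachIn m u t

/-- Flip distance: minimum number of flips transforming `s` into `t`. -/
noncomputable def flipDist (s t : List ℕ) : ℕ := sInf {m | ReachIn m s t}

/-- Two strings are compatible if every symbol occurs equally often in both. -/
def Compatible (s t : List ℕ) : Prop := ∀ a, s.count a = t.count a

/-- A string is fully `k`-ary if the set of symbols occurring in it is exactly `{0,…,k-1}`. -/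
def FullyKary (k : ℕ) (s : List ℕ) : Prop := ∀ a, a ∈ s ↔ a < k

/-- A string is normalized if no two adjacent symbols are equal. -/
def Normalized (s : List ℕ) : Prop := s.Chain' (· ≠ ·)

/-- A string is grouped if the occurrences of each symbol are consecutive. -/
def Grouped (s : List ℕ) : Prop :=
  ∀ i j l : Fin s.length, i < j → j < l → s.get i = s.get l → s.get j = s.get i

/-- Flip grouping distance: minimum number of flips transforming `s` into some grouped string. -/
noncomputable def groupDist (s : List ℕ) : ℕ := sInf {m | ∃ t, Grouped t ∧ ReachIn m s t}

/-- Flip sorting distance: flip distance from `s` to its non-descending rearrangement `I(s)`. -/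
noncomputable def sortDist (s : List ℕ) : ℕ := flipDist s (s.insertionSort (· ≤ ·))

/-- `rep w m` is the concatenation of `m` copies of the string `w`. -/
def rep (w : List ℕ) (m : ℕ) : List ℕ := (List.replicate m w).flatten

/-!
Upper bound, by induction on the length `n`. If `s` and `t` end in the same letter, drop it.
Otherwise it suffices to bring a suffix `w` of `t` of length one or two to the end of `s` with at
most `|w|` flips, since the rest then needs at most `n - |w| - 1` flips. This works if `w = [b]`
and `s` starts with `b` (reverse `s`), or if `w` is the last pair of `t` and occurs in `s`, since
`u ++ w ++ v` becomes `vᴿ ++ u ++ w` after two flips. Up to exchanging `s` and `t`, this fails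
only when `s = a…a` does not contain `bb` and `t = b…b` does not contain `aa`; but then `b` is a
strict minority in `s` and `a` one in `t`.

Lower bound: a flip changes a single adjacency, so it changes the number of unequal adjacent
letters of `s ++ [1]` by at most one. This number is `n` for the alternating string `…1010` and
`1` for its sorted rearrangement `0…01…1`.
-/

open List

section BreakCount

variable {α : Type*} [DecidableEq α]

def breakCount : List α → ℕ
  | a :: b :: l => breakCount (b :: l) + if a = b then 0 else 1
  | _ => 0

theorem breakCount_cons_cons (a b : α) (l : List α) :
    breakCount (a :: b :: l) = breakCount (b :: l) + if a = b then 0 else 1 := rfl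

theorem breakCount_append_cons : ∀ (l : List α) (b : α) (r : List α),
    breakCount (l ++ b :: r) = breakCount (l ++ [b]) + breakCount (b :: r)
  | [], _, _ => by simp [breakCount]
  | [a], b, r => by simp only [cons_append, nil_append, breakCount_cons_cons, breakCount]; omega
  | a :: c :: l, b, r => by
    simp only [cons_append, breakCount_cons_cons]
    rw [← cons_append, breakCount_append_cons (c :: l) b r, cons_append]
    omega

theorem breakCount_reverse : ∀ l : List α, breakCount l.reverse = breakCount l
  | [] | [_] => rfl
  | a :: b :: l => by
    rw [reverse_cons, reverse_cons, append_assoc, singleton_append, breakCount_append_cons,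
      ← reverse_cons, breakCount_reverse, breakCount_cons_cons, breakCount_cons_cons]
    simp [breakCount, eq_comm]

theorem breakCount_le_append_singleton (l : List α) (b : α) :
    breakCount l ≤ breakCount (l ++ [b]) := by
  obtain rfl | ⟨l, x, rfl⟩ := l.eq_nil_or_concat'
  · simp [breakCount]
  · rw [append_assoc, singleton_append, breakCount_append_cons l x [b]]
    omega

theorem breakCount_append_singleton_le (l : List α) (b : α) :
    breakCount (l ++ [b]) ≤ breakCount l + 1 := by
  obtain rfl | ⟨l, x, rfl⟩ := l.eq_nil_or_concat'
  · simp [breakCount]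
  · rw [append_assoc, singleton_append, breakCount_append_cons l x [b], breakCount_cons_cons]
    simp only [breakCount]
    split_ifs <;> omega

theorem breakCount_append_le_reverse_append (l r : List α) :
    breakCount (l ++ r) ≤ breakCount (l.reverse ++ r) + 1 := by
  cases r with
  | nil => simp [breakCount_reverse]
  | cons b r =>
    rw [breakCount_append_cons l b r, breakCount_append_cons l.reverse b r]
    have := breakCount_append_singleton_le l b
    have := breakCount_le_append_singleton l.reverse b
    rw [breakCount_reverse] at this
    omega

end BreakCount

theorem breakCount_le_of_pairwise : ∀ {l : List ℕ} {lo hi : ℕ}, l.Pairwise (· ≤ ·) →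
    (∀ x ∈ l, lo ≤ x ∧ x ≤ hi) → breakCount l ≤ hi - lo
  | [], _, _, _, _ | [_], _, _, _, _ => by simp [breakCount]
  | x :: y :: l, lo, hi, hl, hbound => by
    have hxy : x ≤ y := rel_of_pairwise_cons hl mem_cons_self
    have hyl : ∀ z ∈ y :: l, y ≤ z := by
      simpa using (pairwise_cons.1 hl.of_cons).1
    have hy := breakCount_le_of_pairwise (lo := y) (hi := hi) hl.of_cons fun z hz =>
      ⟨hyl z hz, (hbound z (mem_cons_of_mem x hz)).2⟩
    have := hbound x mem_cons_self
    have := hbound y (mem_cons_of_mem x mem_cons_self)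
    rw [breakCount_cons_cons]
    split_ifs <;> omega

theorem pflip_append_of_le {i : ℕ} {l : List ℕ} (r : List ℕ) (h : i ≤ l.length) :
    pflip i (l ++ r) = pflip i l ++ r := by
  simp [pflip, take_append_of_le_length h, drop_append_of_le_length h]

theorem pflip_length_append (l r : List ℕ) : pflip l.length (l ++ r) = l.reverse ++ r := by
  simp [pflip]

theorem pflip_perm (i : ℕ) (l : List ℕ) : pflip i l ~ l := by
  simpa [pflip] using (reverse_perm (l.take i)).append_right (l.drop i)

theorem pflip_pflip {i : ℕ} {l : List ℕ} (h : i ≤ l.length) : pflip i (pflip i l) = l := by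
  have hlen : (l.take i).reverse.length = i := by simp [h]
  change pflip i ((l.take i).reverse ++ l.drop i) = l
  nth_rw 1 [← hlen]
  rw [pflip_length_append, reverse_reverse, take_append_drop]

theorem breakCount_le_pflip_add_one (i : ℕ) (l : List ℕ) :
    breakCount l ≤ breakCount (pflip i l) + 1 := by
  simpa [pflip] using breakCount_append_le_reverse_append (l.take i) (l.drop i)

namespace FlipStep

variable {s t : List ℕ}

theorem perm (h : FlipStep s t) : s ~ t := by
  obtain ⟨i, -, -, rfl⟩ := h
  exact (pflip_perm i s).symm

theorem symm (h : FlipStep s t) : FlipStep t s := by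
  obtain ⟨i, hi, his, rfl⟩ := h
  exact ⟨i, hi, (pflip_perm i s).length_eq ▸ his, (pflip_pflip his).symm⟩

theorem append_right (r : List ℕ) (h : FlipStep s t) : FlipStep (s ++ r) (t ++ r) := by
  obtain ⟨i, hi, his, rfl⟩ := h
  exact ⟨i, hi, by simp only [length_append]; omega, (pflip_append_of_le r his).symm⟩

end FlipStep

namespace ReachIn

variable {m k : ℕ} {s t u : List ℕ}

theorem of_flipStep (h : FlipStep s t) : ReachIn 1 s t := ⟨t, h, rfl⟩

theorem trans (h₁ : ReachIn m s u) (h₂ : ReachIn k u t) : ReachIn (m + k) s t := by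
  induction m generalizing s with
  | zero => cases h₁; simpa
  | succ m ih =>
    obtain ⟨v, hv, h₁⟩ := h₁
    rw [Nat.add_right_comm]
    exact ⟨v, hv, ih h₁⟩

theorem symm (h : ReachIn m s t) : ReachIn m t s := by
  induction m generalizing s with
  | zero => cases h; rfl
  | succ m ih =>
    obtain ⟨v, hv, h⟩ := h
    exact (ih h).trans (of_flipStep hv.symm)

theorem perm (h : ReachIn m s t) : s ~ t := by
  induction m generalizing s with
  | zero => cases h; rfl
  | succ m ih =>
    obtain ⟨v, hv, h⟩ := h
    exact hv.perm.trans (ih h)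

theorem append_right (r : List ℕ) (h : ReachIn m s t) : ReachIn m (s ++ r) (t ++ r) := by
  induction m generalizing s with
  | zero => cases h; rfl
  | succ m ih =>
    obtain ⟨v, hv, h⟩ := h
    exact ⟨v ++ r, hv.append_right r, ih h⟩

theorem breakCount_append_singleton_le (z : ℕ) (h : ReachIn m s t) :
    breakCount (s ++ [z]) ≤ breakCount (t ++ [z]) + m := by
  induction m generalizing s with
  | zero => cases h; simp
  | succ m ih =>
    obtain ⟨v, ⟨i, -, his, rfl⟩, h⟩ := h
    have := breakCount_le_pflip_add_one i (s ++ [z])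
    rw [pflip_append_of_le [z] his] at this
    have := ih h
    omega

end ReachIn

def ReachWithin (m : ℕ) (s t : List ℕ) : Prop := ∃ k ≤ m, ReachIn k s t

namespace ReachWithin

variable {m k : ℕ} {s t u : List ℕ}

theorem refl (m : ℕ) (s : List ℕ) : ReachWithin m s s := ⟨0, Nat.zero_le m, rfl⟩

theorem mono (h : ReachWithin m s t) (hmk : m ≤ k) : ReachWithin k s t :=
  let ⟨j, hj, hr⟩ := h; ⟨j, hj.trans hmk, hr⟩

theorem trans (h₁ : ReachWithin m s u) (h₂ : ReachWithin k u t) : ReachWithin (m + k) s t :=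
  let ⟨i, hi, hr₁⟩ := h₁
  let ⟨j, hj, hr₂⟩ := h₂
  ⟨i + j, Nat.add_le_add hi hj, hr₁.trans hr₂⟩

theorem symm (h : ReachWithin m s t) : ReachWithin m t s :=
  let ⟨j, hj, hr⟩ := h; ⟨j, hj, hr.symm⟩

theorem perm (h : ReachWithin m s t) : s ~ t :=
  let ⟨_, _, hr⟩ := h; hr.perm

theorem append_right (r : List ℕ) (h : ReachWithin m s t) : ReachWithin m (s ++ r) (t ++ r) :=
  let ⟨j, hj, hr⟩ := h; ⟨j, hj, hr.append_right r⟩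

theorem flipDist_le (h : ReachWithin m s t) : flipDist s t ≤ m :=
  let ⟨_, hj, hr⟩ := h; (Nat.sInf_le hr).trans hj

end ReachWithin

theorem reachWithin_one_reverse_append (l r : List ℕ) :
    ReachWithin 1 (l ++ r) (l.reverse ++ r) := by
  rcases l with _ | ⟨a, l⟩
  · exact ReachWithin.refl 1 r
  · exact ⟨1, le_rfl, .of_flipStep ⟨(a :: l).length, by simp, by simp,
      (pflip_length_append _ r).symm⟩⟩

theorem reachWithin_two_move (u w v : List ℕ) :
    ReachWithin 2 (u ++ w ++ v) (v.reverse ++ u ++ w) := by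
  have h := reachWithin_one_reverse_append ((u ++ w).reverse ++ v) []
  rw [append_nil, append_nil] at h
  simpa using (reachWithin_one_reverse_append (u ++ w) v).trans h

section Counting

variable {α : Type*}

theorem exists_pair_infix {b : α} : ∀ {l : List α}, b ∈ l → l.head? ≠ some b →
    ∃ c, c ≠ b ∧ [c, b] <:+: l
  | [], hb, _ => absurd hb not_mem_nil
  | [x], hb, hx => by simp_all
  | x :: y :: l, hb, hx => by
    have hxb : x ≠ b := by simpa using hx
    by_cases hy : y = b
    · exact ⟨x, hxb, by subst hy; exact (prefix_append [x, y] l).isInfix⟩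
    · obtain ⟨c, hcb, hc⟩ := exists_pair_infix (l := y :: l) (by simpa [hxb.symm] using hb)
        (by simpa using hy)
      exact ⟨c, hcb, hc.trans (suffix_cons x _).isInfix⟩

theorem exists_pair_suffix {b : α} {l : List α} (hl : l.getLast? = some b)
    (hx : ∃ x ∈ l, x ≠ b) : ∃ c, [c, b] <:+ l := by
  obtain ⟨l, rfl⟩ := getLast?_eq_some_iff.1 hl
  obtain rfl | ⟨l, c, rfl⟩ := l.eq_nil_or_concat'
  · simp at hx
  · exact ⟨c, l, by simp⟩

variable [DecidableEq α]

theorem two_mul_count_le_length_add_one {b : α} :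
    ∀ {l : List α}, ¬ [b, b] <:+: l → 2 * l.count b ≤ l.length + 1
  | [], _ => by simp
  | [x], _ => by rw [count_singleton]; split <;> simp
  | x :: y :: l, hl => by
    by_cases hx : x = b
    · subst hx
      have hy : y ≠ x := by rintro rfl; exact hl (prefix_append [y, y] l).isInfix
      have := two_mul_count_le_length_add_one (l := l) fun h =>
        hl (h.trans ((suffix_cons y l).trans (suffix_cons x _)).isInfix)
      simp only [count_cons_self, count_cons_of_ne hy, length_cons]
      omega
    · have := two_mul_count_le_length_add_one (l := y :: l) fun h =>
        hl (h.trans (suffix_cons x _).isInfix)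
      simp only [count_cons_of_ne hx, length_cons] at this ⊢
      omega

theorem two_mul_count_lt_length {b : α} {l : List α} (hl : l ≠ []) (hhead : l.head? ≠ some b)
    (hlast : l.getLast? ≠ some b) (hbb : ¬ [b, b] <:+: l) : 2 * l.count b < l.length := by
  obtain ⟨x, r, rfl⟩ := exists_cons_of_ne_nil hl
  obtain rfl | ⟨r, y, rfl⟩ := r.eq_nil_or_concat'
  · simp_all
  have hx : x ≠ b := by simpa using hhead
  have hy : y ≠ b := by rwa [← cons_append, getLast?_concat, Ne, Option.some_inj] at hlast
  have := two_mul_count_le_length_add_one fun h => hbb (h.trans (infix_append [x] r [y]))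
  simp only [count_cons_of_ne hx, count_append, count_cons_of_ne hy, count_nil, length_cons,
    length_append, length_nil]
  omega

theorem count_add_count_eq_length {a b : α} (hab : a ≠ b) :
    ∀ {l : List α}, (∀ x ∈ l, x = a ∨ x = b) → l.count a + l.count b = l.length
  | [], _ => by simp
  | x :: l, hl => by
    have := count_add_count_eq_length hab fun y hy => hl y (mem_cons_of_mem x hy)
    rcases hl x mem_cons_self with rfl | rfl
    · simp only [count_cons_self, count_cons_of_ne hab, length_cons]; omega
    · simp only [count_cons_self, count_cons_of_ne hab.symm, length_cons]; omega

theorem not_perm_of_ends {a b : α} {s t : List α} (hab : a ≠ b)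
    (hsab : ∀ x ∈ s, x = a ∨ x = b) (hsh : s.head? = some a) (hsl : s.getLast? = some a)
    (hth : t.head? = some b) (htl : t.getLast? = some b) (hs : ¬ [b, b] <:+: s)
    (ht : ¬ [a, a] <:+: t) : ¬ s ~ t := fun hst => by
  have hs₂ := two_mul_count_lt_length (by rintro rfl; simp at hsh)
    (by simp [hsh, hab]) (by simp [hsl, hab]) hs
  have ht₂ := two_mul_count_lt_length (by rintro rfl; simp at hth)
    (by simp [hth, hab.symm]) (by simp [htl, hab.symm]) ht
  have := count_add_count_eq_length hab hsab
  have := hst.count_eq a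
  have := hst.length_eq
  omega

end Counting

def BinaryFlipBound (n : ℕ) : Prop :=
  ∀ s t : List ℕ, s.length = n → s ~ t → (∀ x ∈ s, x < 2) → ReachWithin (n - 1) s t

section UpperBound

variable {n : ℕ} {s t : List ℕ}

theorem reachWithin_of_reachWithin_append (IH : ∀ m < n, BinaryFlipBound m)
    (hlen : s.length = n) (hst : s ~ t) (hbin : ∀ x ∈ s, x < 2) {k : ℕ} {s' t' w : List ℕ}
    (hw : w ≠ []) (hs : ReachWithin k s (s' ++ w)) (ht : t = t' ++ w) :
    ReachWithin (k + (s'.length - 1)) s t := by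
  subst ht
  have hperm : s' ++ w ~ s := hs.perm.symm
  have hlt : s'.length < n := by
    have := hperm.length_eq
    have := length_pos_iff.2 hw
    simp only [length_append] at *
    omega
  have hs't' : s' ~ t' := (perm_append_right_iff w).1 (hperm.trans hst)
  exact hs.trans <| (IH _ hlt s' t' rfl hs't' fun x hx =>
    hbin x (hperm.subset (mem_append_left w hx))).append_right w

theorem reachWithin_of_getLast?_eq (IH : ∀ m < n, BinaryFlipBound m) (hlen : s.length = n)
    (hst : s ~ t) (hbin : ∀ x ∈ s, x < 2) {b : ℕ} (hs : s.getLast? = some b)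
    (ht : t.getLast? = some b) : ReachWithin (n - 1) s t := by
  obtain ⟨s', rfl⟩ := getLast?_eq_some_iff.1 hs
  obtain ⟨t', rfl⟩ := getLast?_eq_some_iff.1 ht
  refine (reachWithin_of_reachWithin_append IH hlen hst hbin (cons_ne_nil b [])
    (.refl 0 _) rfl).mono ?_
  simp only [length_append, length_singleton] at hlen
  omega

theorem reachWithin_of_head?_eq_getLast? (IH : ∀ m < n, BinaryFlipBound m)
    (hlen : s.length = n) (hst : s ~ t) (hbin : ∀ x ∈ s, x < 2) {b : ℕ}
    (hs : s.head? = some b) (ht : t.getLast? = some b) (hsb : s.getLast? ≠ some b) :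
    ReachWithin (n - 1) s t := by
  obtain ⟨v, rfl⟩ := head?_eq_some_iff.1 hs
  obtain ⟨t', rfl⟩ := getLast?_eq_some_iff.1 ht
  have hv : v ≠ [] := by rintro rfl; simp at hsb
  have hflip : ReachWithin 1 (b :: v) (v.reverse ++ [b]) := by
    simpa using reachWithin_one_reverse_append (b :: v) []
  refine (reachWithin_of_reachWithin_append IH hlen hst hbin (cons_ne_nil b []) hflip
    rfl).mono ?_
  have := length_pos_iff.2 hv
  simp only [length_cons, length_reverse] at hlen ⊢
  omega

theorem reachWithin_of_pair_infix (IH : ∀ m < n, BinaryFlipBound m) (hlen : s.length = n)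
    (hst : s ~ t) (hbin : ∀ x ∈ s, x < 2) {b c : ℕ} (ht : [c, b] <:+ t) (hs : [c, b] <:+: s)
    (hsb : s.getLast? ≠ some b) : ReachWithin (n - 1) s t := by
  obtain ⟨t', rfl⟩ := ht
  obtain ⟨u, v, rfl⟩ := hs
  have hv : v ≠ [] := by rintro rfl; simp at hsb
  refine (reachWithin_of_reachWithin_append IH hlen hst hbin (cons_ne_nil c [b])
    (reachWithin_two_move u [c, b] v) rfl).mono ?_
  have := length_pos_iff.2 hv
  simp only [length_append, length_reverse, length_cons, length_nil] at hlen ⊢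
  omega

theorem reachWithin_of_same_ends (IH : ∀ m < n, BinaryFlipBound m)
    (hlen : s.length = n) (hst : s ~ t) (hbin : ∀ x ∈ s, x < 2) {a b : ℕ} (hab : a ≠ b)
    (hsh : s.head? = some a) (hsl : s.getLast? = some a) (hth : t.head? = some b)
    (htl : t.getLast? = some b) : ReachWithin (n - 1) s t := by
  have htlen : t.length = n := hst.length_eq ▸ hlen
  have htbin : ∀ x ∈ t, x < 2 := fun x hx => hbin x (hst.mem_iff.2 hx)
  have hat : a ∈ t := hst.subset (mem_of_mem_head? hsh)
  have hbs : b ∈ s := hst.mem_iff.2 (mem_of_mem_head? hth)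
  have hsab : ∀ x ∈ s, x = a ∨ x = b := fun x hx => by
    have := hbin x hx; have := hbin a (hst.mem_iff.2 hat); have := hbin b hbs; omega
  have htab : ∀ x ∈ t, x = a ∨ x = b := fun x hx => hsab x (hst.mem_iff.2 hx)
  obtain ⟨c, hc⟩ := exists_pair_suffix htl ⟨a, hat, hab⟩
  obtain ⟨d, hd⟩ := exists_pair_suffix hsl ⟨b, hbs, hab.symm⟩
  by_cases hcs : [c, b] <:+: s
  · exact reachWithin_of_pair_infix IH hlen hst hbin hc hcs (by simp [hsl, hab])
  by_cases hdt : [d, a] <:+: t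
  · exact (reachWithin_of_pair_infix IH htlen hst.symm htbin hd hdt
      (by simp [htl, hab.symm])).symm
  -- `s` starts with `a` and contains `b`, so `[a, b]` occurs in `s`; hence `c = b`.
  have hcb : c = b := by
    obtain ⟨c', hc'b, hc's⟩ := exists_pair_infix hbs (by simp [hsh, hab])
    have hc'a : c' = a := (hsab c' (hc's.subset (by simp))).resolve_right hc'b
    exact (htab c (hc.subset (by simp))).resolve_left fun hca => hcs (hca ▸ hc'a ▸ hc's)
  have hda : d = a := by
    obtain ⟨d', hd'a, hd't⟩ := exists_pair_infix hat (by simp [hth, hab.symm])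
    have hd'b : d' = b := (htab d' (hd't.subset (by simp))).resolve_left hd'a
    exact (hsab d (hd.subset (by simp))).resolve_right fun hdb => hdt (hdb ▸ hd'b ▸ hd't)
  rw [hcb] at hcs
  rw [hda] at hdt
  exact absurd hst (not_perm_of_ends hab hsab hsh hsl hth htl hcs hdt)

end UpperBound

theorem binaryFlipBound (n : ℕ) : BinaryFlipBound n := by
  induction n using Nat.strong_induction_on with
  | _ n IH =>
  intro s t hlen hst hbin
  obtain rfl | hs := eq_or_ne s []
  · rw [nil_perm.1 hst]
    exact .refl _ []
  have ht : t ≠ [] := fun h => hs (perm_nil.1 (h ▸ hst))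
  have htlen : t.length = n := hst.length_eq ▸ hlen
  have htbin : ∀ x ∈ t, x < 2 := fun x hx => hbin x (hst.mem_iff.2 hx)
  obtain ⟨x, hx⟩ := Option.ne_none_iff_exists'.1 (mt head?_eq_none_iff.1 hs)
  obtain ⟨y, hy⟩ := Option.ne_none_iff_exists'.1 (mt head?_eq_none_iff.1 ht)
  obtain ⟨a, ha⟩ := Option.ne_none_iff_exists'.1 (mt getLast?_eq_none_iff.1 hs)
  obtain ⟨b, hb⟩ := Option.ne_none_iff_exists'.1 (mt getLast?_eq_none_iff.1 ht)
  by_cases hab : a = b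
  · exact reachWithin_of_getLast?_eq IH hlen hst hbin ha (hab ▸ hb)
  by_cases hxb : x = b
  · exact reachWithin_of_head?_eq_getLast? IH hlen hst hbin (hxb ▸ hx) hb (by simp [ha, hab])
  by_cases hya : y = a
  · exact (reachWithin_of_head?_eq_getLast? IH htlen hst.symm htbin (hya ▸ hy) ha
      (by simp [hb, Ne.symm hab])).symm
  have := hbin x (mem_of_mem_head? hx)
  have := hbin a (mem_of_mem_getLast? ha)
  have := htbin y (mem_of_mem_head? hy)
  have := htbin b (mem_of_mem_getLast? hb)
  obtain rfl : x = a := by omega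
  obtain rfl : y = b := by omega
  exact reachWithin_of_same_ends IH hlen hst hbin hab hx ha hy hb

def alternating : ℕ → List ℕ
  | 0 => []
  | n + 1 => n % 2 :: alternating n

@[simp] theorem length_alternating (n : ℕ) : (alternating n).length = n := by
  induction n <;> simp [alternating, *]

theorem lt_two_of_mem_alternating {n a : ℕ} (h : a ∈ alternating n) : a < 2 := by
  induction n with
  | zero => simp [alternating] at h
  | succ n ih =>
    rcases mem_cons.1 h with rfl | h
    exacts [Nat.mod_lt _ two_pos, ih h]

theorem fullyKary_alternating {n : ℕ} (hn : 2 ≤ n) : FullyKary 2 (alternating n) := by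
  obtain ⟨n, rfl⟩ := Nat.exists_eq_add_of_le' hn
  refine fun a => ⟨lt_two_of_mem_alternating, fun ha => ?_⟩
  simp only [alternating, mem_cons]
  omega

theorem breakCount_alternating_append_one : ∀ n, breakCount (alternating n ++ [1]) = n
  | 0 | 1 => rfl
  | n + 2 => by
    have ih := breakCount_alternating_append_one (n + 1)
    simp only [alternating, cons_append] at ih ⊢
    rw [breakCount_cons_cons, ih]
    split_ifs <;> omega

theorem breakCount_insertionSort_append_one_le {l : List ℕ} (hl : ∀ x ∈ l, x < 2) :
    breakCount (l.insertionSort (· ≤ ·) ++ [1]) ≤ 1 := by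
  have hmem : ∀ x ∈ l.insertionSort (· ≤ ·), x ≤ 1 := fun x hx =>
    Nat.lt_succ_iff.1 (hl x ((perm_insertionSort _ l).subset hx))
  refine breakCount_le_of_pairwise (lo := 0) ?_ ?_
  · exact pairwise_append.2 ⟨pairwise_insertionSort _ l, pairwise_singleton _ _,
      fun x hx y hy => (mem_singleton.1 hy) ▸ hmem x hx⟩
  · simpa [or_imp, forall_and] using hmem

theorem le_of_reachIn_alternating_insertionSort {n m : ℕ}
    (h : ReachIn m (alternating n) ((alternating n).insertionSort (· ≤ ·))) : n ≤ m + 1 := by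
  have := h.breakCount_append_singleton_le 1
  have := breakCount_insertionSort_append_one_le fun _ => lt_two_of_mem_alternating (n := n)
  rw [breakCount_alternating_append_one] at *
  omega

theorem binary_diameter (n : ℕ) (hn : 2 ≤ n) :
    (∀ s t : List ℕ, s.length = n → t.length = n → FullyKary 2 s → FullyKary 2 t →
      Compatible s t → flipDist s t ≤ n - 1) ∧
    (∃ s t : List ℕ, s.length = n ∧ t.length = n ∧ FullyKary 2 s ∧ FullyKary 2 t ∧
      Compatible s t ∧ flipDist s t = n - 1) := by
  have upper : ∀ s t : List ℕ, s.length = n → FullyKary 2 s → Compatible s t →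
      ReachWithin (n - 1) s t := fun s t hs hks hst =>
    binaryFlipBound n s t hs (perm_iff_count.2 hst) fun x hx => (hks x).1 hx
  refine ⟨fun s t hs _ hks _ hst => (upper s t hs hks hst).flipDist_le, ?_⟩
  set s := alternating n
  have hsort : s.insertionSort (· ≤ ·) ~ s := perm_insertionSort _ s
  have hks : FullyKary 2 s := fullyKary_alternating hn
  have hst : Compatible s (s.insertionSort (· ≤ ·)) := perm_iff_count.1 hsort.symm
  have hreach := upper s _ (length_alternating n) hks hst
  refine ⟨s, _, length_alternating n, (length_insertionSort _ s).trans (length_alternating n),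
    hks, fun a => hsort.mem_iff.trans (hks a), hst, ?_⟩
  refine le_antisymm hreach.flipDist_le (le_csInf (hreach.imp fun _ => And.right) fun k hk => ?_)
  have := le_of_reachIn_alternating_insertionSort hk
  omega
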